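/- arXiv:1007.1666 — 4 statements merged into one kernel-verified Lean document; each statement's English description precedes it below -/
import Mathlib

section
/- Let μ be an infinite cardinal and let 𝒜 ⊆ [μ]^μ be a maximal almost disjoint family (i.e., distinct members intersect in a set of size < μ, and every set in [μ]^μ meets some member of 𝒜 in a set of size μ). Suppose N ∈ [μ]^μ is such that for every subfamily 𝒜' ⊆ 𝒜 with |𝒜'| < μ, the set N \ ⋃𝒜' has size μ. Then the set Φ = {M ∈ 𝒜 : |N ∩ M| = μ} has cardinality > μ. -/
open Set Cardinal

universe u

/-- Let `μ` be an infinite cardinal (realized as `#α` for an infinite type `α`) and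
`𝒜 ⊆ [μ]^μ` a MAD family. If `N ∈ [μ]^μ` satisfies `|N \ ⋃𝒜'| = μ` for every
`𝒜' ∈ [𝒜]^{<μ}`, then `Φ = {M ∈ 𝒜 : |N ∩ M| = μ}` has cardinality `> μ`. -/
theorem stmt0 {α : Type u} [Infinite α] (𝒜 : Set (Set α))
    (h_size : ∀ A ∈ 𝒜, #A = #α)
    (h_ad : ∀ A ∈ 𝒜, ∀ B ∈ 𝒜, A ≠ B → #(↥(A ∩ B)) < #α)
    (h_mad : ∀ A : Set α, #A = #α → ∃ M ∈ 𝒜, #(↥(A ∩ M)) = #α)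
    (N : Set α) (hN : #N = #α)
    (hNbig : ∀ 𝒜' ⊆ 𝒜, #𝒜' < #α → #(↥(N \ ⋃₀ 𝒜')) = #α) :
    #α < #({M ∈ 𝒜 | #(↥(N ∩ M)) = #α} : Set (Set α)) := by
  classical
  set μ := #α with hμdef
  have hμinf : ℵ₀ ≤ μ := Cardinal.infinite_iff.mp ‹Infinite α›
  set Φ : Set (Set α) := {M ∈ 𝒜 | #(↥(N ∩ M)) = μ} with hΦdef
  by_contra hcon
  push_neg at hcon
  -- a general fact: subsets of N that are ≤ μ in card etc.
  rcases lt_or_eq_of_le hcon with hlt | heq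
  · -- case #Φ < μ
    have h1 := hNbig Φ (sep_subset _ _) hlt
    obtain ⟨M, hM𝒜, hMc⟩ := h_mad _ h1
    have hsub : (N \ ⋃₀ Φ) ∩ M ⊆ N ∩ M := inter_subset_inter_left _ diff_subset
    have hMΦ : M ∈ Φ := by
      refine ⟨hM𝒜, le_antisymm ?_ ?_⟩
      · exact (mk_le_mk_of_subset inter_subset_left).trans hN.le
      · exact hMc.ge.trans (mk_le_mk_of_subset hsub)
    have hempty : (N \ ⋃₀ Φ) ∩ M = ∅ := by
      apply eq_empty_of_subset_empty
      intro x hx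
      exact hx.1.2 ⟨M, hMΦ, hx.2⟩
    rw [hempty] at hMc
    simp only [mk_emptyCollection] at hMc
    exact absurd hMc.symm (aleph0_pos.trans_le hμinf).ne'
  · -- case #Φ = μ
    -- enumerate Φ by T := (ord μ).toType
    have hTcard : #(Cardinal.ord μ).ToType = μ := by
      rw [Cardinal.mk_toType, Cardinal.card_ord]
    obtain ⟨e⟩ : Nonempty ((Cardinal.ord μ).ToType ≃ ↥Φ) :=
      Cardinal.eq.mp (hTcard.trans heq.symm)
    set M : (Cardinal.ord μ).ToType → Set α := fun i => (e i : Set α) with hM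
    have hM𝒜 : ∀ i, M i ∈ 𝒜 := fun i => (e i).2.1
    have hMinj : Function.Injective M := fun a b h => e.injective (Subtype.ext h)
    have hIio : ∀ i : (Cardinal.ord μ).ToType, #(Iio i : Set (Cardinal.ord μ).ToType) < μ := by
      intro i
      have h2 := Ordinal.typein_lt_self i
      have h3 := Cardinal.lt_ord.mp h2
      have h1 := @Ordinal.card_typein (Cardinal.ord μ).ToType (· < ·) isWellOrder_lt i
      exact h1.trans_lt h3
    have hIic : ∀ i : (Cardinal.ord μ).ToType, #(Iic i : Set (Cardinal.ord μ).ToType) < μ := by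
      intro i
      have h1 : (Iic i : Set (Cardinal.ord μ).ToType) = insert i (Iio i) := by
        ext j; simp [le_iff_lt_or_eq, or_comm]
      rw [h1]
      calc #(insert i (Iio i) : Set (Cardinal.ord μ).ToType) ≤ #(Iio i : Set (Cardinal.ord μ).ToType) + 1 := mk_insert_le
        _ < μ := Cardinal.add_lt_of_lt hμinf (hIio i) (one_lt_aleph0.trans_le hμinf)
    -- the diagonal construction
    have hne : ∀ (i : (Cardinal.ord μ).ToType) (g : ∀ j, j < i → α),
        ((N \ ⋃₀ (M '' Iic i)) \ {x | ∃ j, ∃ h : j < i, g j h = x}).Nonempty := by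
      intro i g
      have hbig : #(↥(N \ ⋃₀ (M '' Iic i))) = μ := by
        apply hNbig
        · rintro _ ⟨j, -, rfl⟩; exact hM𝒜 j
        · exact (mk_image_le).trans_lt (hIic i)
      have hprev : #(↥{x | ∃ j, ∃ h : j < i, g j h = x}) < μ := by
        have : {x | ∃ j, ∃ h : j < i, g j h = x} =
            range (fun p : (Iio i : Set (Cardinal.ord μ).ToType) => g p.1 p.2) := by
          ext x
          constructor
          · rintro ⟨j, hj, rfl⟩; exact ⟨⟨j, hj⟩, rfl⟩
          · rintro ⟨⟨j, hj⟩, rfl⟩; exact ⟨j, hj, rfl⟩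
        rw [this]
        exact mk_range_le.trans_lt (hIio i)
      by_contra hemp
      rw [not_nonempty_iff_eq_empty, diff_eq_empty] at hemp
      exact absurd ((hbig.ge.trans (mk_le_mk_of_subset hemp)).trans_lt hprev) (lt_irrefl _)
    set f : (Cardinal.ord μ).ToType → α := (IsWellFounded.wf (α := (Cardinal.ord μ).ToType) (r := (· < ·))).fix
      (fun i IH => (hne i IH).some) with hf
    have hfspec : ∀ i : (Cardinal.ord μ).ToType, f i ∈
        (N \ ⋃₀ (M '' Iic i)) \ {x | ∃ j, ∃ h : j < i, f j = x} := by
      intro i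
      have := (hne i (fun j _ => f j)).some_mem
      rwa [hf, WellFounded.fix_eq]
    have hfN : ∀ i, f i ∈ N := fun i => (hfspec i).1.1
    have hfM : ∀ i j : (Cardinal.ord μ).ToType, j ≤ i → f i ∉ M j := by
      intro i j hji hmem
      exact (hfspec i).1.2 ⟨M j, ⟨j, hji, rfl⟩, hmem⟩
    have hfinj : Function.Injective f := by
      intro a b hab
      rcases lt_trichotomy a b with h | h | h
      · exact absurd ⟨a, h, hab⟩ (hfspec b).2
      · exact h
      · exact absurd ⟨b, h, hab.symm⟩ (hfspec a).2
    have hAcard : #(range f) = μ := by rw [mk_range_eq f hfinj, hTcard]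
    obtain ⟨M', hM'𝒜, hM'c⟩ := h_mad _ hAcard
    have hsmall : #(↥(range f ∩ M')) < μ := by
      by_cases hΦ' : M' ∈ Φ
      · obtain ⟨i, hi⟩ : ∃ i, M i = M' := ⟨e.symm ⟨M', hΦ'⟩, by simp [hM]⟩
        have hsub : range f ∩ M' ⊆ f '' Iio i := by
          rintro x ⟨⟨j, rfl⟩, hx⟩
          rcases le_or_gt i j with h | h
          · exact absurd (hi ▸ hx) (hfM j i h)
          · exact ⟨j, h, rfl⟩
        exact (mk_le_mk_of_subset hsub).trans_lt (mk_image_le.trans_lt (hIio i))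
      · have h1 : #(↥(N ∩ M')) ≠ μ := fun h => hΦ' ⟨hM'𝒜, h⟩
        have h2 : #(↥(N ∩ M')) ≤ μ := (mk_le_mk_of_subset inter_subset_left).trans hN.le
        have h3 : #(↥(N ∩ M')) < μ := lt_of_le_of_ne h2 h1
        refine (mk_le_mk_of_subset ?_).trans_lt h3
        exact inter_subset_inter_left _ (range_subset_iff.mpr hfN)
    exact absurd hM'c hsmall.ne
end

section
/- If 2^ω = ω₁, then there exists a maximal almost disjoint family on ω₁ (consisting of subsets of ω₁ of size ω₁, pairwise intersecting in countable sets) of cardinality 2^{ω₁}. -/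
/-!
Under CH the full binary tree of height `ω₁` has only `ℵ₁` nodes, so it can be identified with a
subset of `ω₁`. The `2^ℵ₁` branches of the tree are uncountable, and two distinct branches share
only the nodes below the first level where they split, hence countably many. This almost disjoint
family extends, by Zorn's lemma, to a maximal one, which still has at most `2^ℵ₁` members.
-/

open Set Cardinal

universe u

/-- The paper's almost disjoint families on `ω₁` are those with `X = ω₁`, `κ = ℵ₁` and `μ = ℵ₀`. -/
def IsAlmostDisjointFamily {α : Type u} (X : Set α) (κ μ : Cardinal.{u}) (𝒜 : Set (Set α)) :
    Prop :=
  (∀ A ∈ 𝒜, A ⊆ X ∧ #A = κ) ∧ 𝒜.Pairwise fun A B => #(A ∩ B : Set α) ≤ μ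

namespace IsAlmostDisjointFamily

variable {α : Type u} {X : Set α} {κ μ : Cardinal.{u}} {𝒜 : Set (Set α)}

theorem image {β : Type u} {ℬ : Set (Set β)} (h : IsAlmostDisjointFamily univ κ μ ℬ)
    (φ : β ↪ α) (hφ : range φ ⊆ X) : IsAlmostDisjointFamily X κ μ ((φ '' ·) '' ℬ) := by
  refine ⟨?_, ?_⟩
  · rintro _ ⟨B, hB, rfl⟩
    exact ⟨(image_subset_range _ _).trans hφ, (mk_image_eq φ.injective).trans (h.1 B hB).2⟩
  · rintro _ ⟨B, hB, rfl⟩ _ ⟨C, hC, rfl⟩ hBC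
    rw [← image_inter φ.injective, mk_image_eq φ.injective]
    exact h.2 hB hC fun hBC' => hBC (hBC' ▸ rfl)

theorem exists_maximal_superset (h : IsAlmostDisjointFamily X κ μ 𝒜) :
    ∃ ℳ, 𝒜 ⊆ ℳ ∧ Maximal (IsAlmostDisjointFamily X κ μ) ℳ := by
  refine zorn_subset_nonempty {ℳ | IsAlmostDisjointFamily X κ μ ℳ}
    (fun c hc hchain _ => ⟨⋃₀ c, ⟨?_, ?_⟩, fun _ => subset_sUnion_of_mem⟩) 𝒜 h
  · rintro A ⟨ℳ, hℳ, hA⟩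
    exact (hc hℳ).1 A hA
  · rintro A ⟨ℳ, hℳ, hA⟩ B ⟨𝒩, h𝒩, hB⟩ hAB
    rcases hchain.total hℳ h𝒩 with hℳ𝒩 | h𝒩ℳ
    · exact (hc h𝒩).2 (hℳ𝒩 hA) hB hAB
    · exact (hc hℳ).2 hA (h𝒩ℳ hB) hAB

theorem exists_lt_mk_inter_of_maximal (h : Maximal (IsAlmostDisjointFamily X κ μ) 𝒜)
    (hμκ : μ < κ) {N : Set α} (hNX : N ⊆ X) (hN : #N = κ) :
    ∃ A ∈ 𝒜, μ < #(N ∩ A : Set α) := by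
  by_contra! hsmall
  -- otherwise `N` could be added to `𝒜`
  have hinsert : IsAlmostDisjointFamily X κ μ (insert N 𝒜) := by
    refine ⟨?_, pairwise_insert.2 ⟨h.prop.2, fun A hA _ => ⟨hsmall A hA, ?_⟩⟩⟩
    · rintro A (rfl | hA)
      exacts [⟨hNX, hN⟩, h.prop.1 A hA]
    · simpa only [inter_comm] using hsmall A hA
  have hNmem : N ∈ 𝒜 := h.le_of_ge hinsert (subset_insert N 𝒜) (mem_insert N 𝒜)
  exact (hsmall N hNmem).not_gt (by rwa [inter_self, hN])

theorem exists_mk_inter_eq_of_maximal (h : Maximal (IsAlmostDisjointFamily X κ μ) 𝒜)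
    (hκ : κ = Order.succ μ) {N : Set α} (hNX : N ⊆ X) (hN : #N = κ) :
    ∃ A ∈ 𝒜, #(N ∩ A : Set α) = κ := by
  obtain ⟨A, hA, hμ⟩ := exists_lt_mk_inter_of_maximal h (hκ ▸ Order.lt_succ μ) hNX hN
  refine ⟨A, hA, le_antisymm ?_ (hκ ▸ Order.succ_le_of_lt hμ)⟩
  exact (mk_le_mk_of_subset inter_subset_right).trans_eq (h.prop.1 A hA).2

theorem mk_le_two_power (h : IsAlmostDisjointFamily X κ μ 𝒜) : #𝒜 ≤ 2 ^ #X := by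
  rw [← mk_powerset]
  exact mk_le_mk_of_subset fun A hA => (h.1 A hA).1

end IsAlmostDisjointFamily

/-- A node of height `i` of the full binary tree of height `ι`. -/
abbrev TreeNode (ι : Type u) [Preorder ι] : Type u :=
  Σ i : ι, (Iio i → Bool)

namespace TreeNode

variable {ι : Type u} [LinearOrder ι]

def restrict (f : ι → Bool) (i : ι) : TreeNode ι :=
  ⟨i, fun j => f j⟩

def branch (f : ι → Bool) : Set (TreeNode ι) :=
  range (restrict f)

theorem restrict_injective (f : ι → Bool) : Function.Injective (restrict f) :=
  fun _ _ h => congrArg Sigma.fst h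

theorem mk_branch (f : ι → Bool) : #(branch f) = #ι :=
  mk_range_eq _ (restrict_injective f)

theorem branch_inter_branch_subset {f g : ι → Bool} {β : ι} (hβ : f β ≠ g β) :
    branch f ∩ branch g ⊆ restrict f '' Iic β := by
  rintro _ ⟨⟨i, rfl⟩, ⟨i', hi'⟩⟩
  obtain rfl : i' = i := congrArg Sigma.fst hi'
  refine ⟨i', le_of_not_gt fun hβi => hβ ?_, rfl⟩
  have hrestr := eq_of_heq (Sigma.mk.inj_iff.1 hi').2
  exact (congrFun hrestr ⟨β, hβi⟩).symm

theorem mk_branch_inter_branch_le {f g : ι → Bool} {β : ι} (hβ : f β ≠ g β) :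
    #(branch f ∩ branch g : Set _) ≤ #(Iic β) :=
  (mk_le_mk_of_subset (branch_inter_branch_subset hβ)).trans mk_image_le

theorem isAlmostDisjointFamily_range_branch {μ : Cardinal.{u}} (hμ : ∀ β : ι, #(Iic β) ≤ μ) :
    IsAlmostDisjointFamily univ #ι μ (range (branch (ι := ι))) := by
  refine ⟨fun _ ⟨f, hf⟩ => hf ▸ ⟨subset_univ _, mk_branch f⟩, ?_⟩
  rintro _ ⟨f, rfl⟩ _ ⟨g, rfl⟩ hfg
  obtain ⟨β, hβ⟩ := Function.ne_iff.1 fun hfg' => hfg (congrArg branch hfg')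
  exact (mk_branch_inter_branch_le hβ).trans (hμ β)

theorem branch_injective (hι : ∀ β : ι, #(Iic β) < #ι) : Function.Injective (branch (ι := ι)) := by
  intro f g hfg
  by_contra! hne
  obtain ⟨β, hβ⟩ := Function.ne_iff.1 hne
  have := mk_branch_inter_branch_le hβ
  rw [hfg, inter_self, mk_branch] at this
  exact (hι β).not_ge this

end TreeNode

abbrev countableOrdinals : Set Ordinal.{0} :=
  Iio (aleph.{0} 1).ord

theorem mk_countableOrdinals : #countableOrdinals = lift.{1} (aleph.{0} 1) := by
  rw [mk_Iio_ordinal, card_ord]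

theorem mk_Iic_countableOrdinals_le (β : countableOrdinals) : #(Iic β) ≤ ℵ₀ := by
  have hsucc : Order.succ β.1 < (aleph.{0} 1).ord :=
    (isSuccLimit_ord (aleph0_le_aleph 1)).succ_lt β.2
  calc #(Iic β) ≤ #(Iio (Order.succ β.1)) :=
        mk_le_of_injective (f := fun γ => ⟨γ.1.1, mem_Iio.2 (Order.lt_succ_of_le γ.2)⟩)
          fun γ γ' h => by simpa [Subtype.ext_iff] using h
    _ = lift.{1} (Order.succ β.1).card := mk_Iio_ordinal _
    _ ≤ ℵ₀ := by
      rw [← lift_aleph0.{1, 0}, lift_le]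
      exact lt_aleph_one_iff.1 (lt_ord.1 hsucc)

theorem mk_treeNode_countableOrdinals_le (h : (2 : Cardinal.{0}) ^ ℵ₀ = ℵ₁) :
    #(TreeNode countableOrdinals) ≤ lift.{1} (aleph.{0} 1) := by
  have hnode (i : countableOrdinals) : #(Iio i → Bool) ≤ lift.{1} (aleph.{0} 1) := calc
    #(Iio i → Bool) = 2 ^ #(Iio i) := by simp
    _ ≤ 2 ^ ℵ₀ := power_le_power_left two_ne_zero
      ((mk_le_mk_of_subset Iio_subset_Iic_self).trans (mk_Iic_countableOrdinals_le i))
    _ = lift.{1} (aleph.{0} 1) := by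
      rw [← lift_aleph0.{1, 0}, ← lift_two_power]
      exact congrArg lift.{1} h
  calc #(TreeNode countableOrdinals) = sum fun i => #(Iio i → Bool) := mk_sigma _
    _ ≤ sum fun _ : countableOrdinals => lift.{1} (aleph.{0} 1) := sum_le_sum _ _ hnode
    _ = lift.{1} (aleph.{0} 1) * lift.{1} (aleph.{0} 1) := by rw [sum_const', mk_countableOrdinals]
    _ = lift.{1} (aleph.{0} 1) := mul_eq_self (by simp)

/-- If `2^ω = ω₁` then there is a MAD family on `ω₁` (subsets of `ω₁` of size `ω₁`,
pairwise countable intersections) of cardinality `2^{ω₁}`. -/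
theorem stmt2 (h : (2 : Cardinal) ^ Cardinal.aleph0.{0} = Cardinal.aleph.{0} 1) :
    ∃ 𝒜 : Set (Set Ordinal.{0}),
      (∀ A ∈ 𝒜, A ⊆ Set.Iio (Cardinal.aleph.{0} 1).ord ∧
        #A = Cardinal.lift.{1} (Cardinal.aleph.{0} 1)) ∧
      (∀ A ∈ 𝒜, ∀ B ∈ 𝒜, A ≠ B → #(↥(A ∩ B)) ≤ Cardinal.lift.{1} Cardinal.aleph0.{0}) ∧
      (∀ N ⊆ Set.Iio (Cardinal.aleph.{0} 1).ord, #N = Cardinal.lift.{1} (Cardinal.aleph.{0} 1) →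
        ∃ A ∈ 𝒜, #(↥(N ∩ A)) = Cardinal.lift.{1} (Cardinal.aleph.{0} 1)) ∧
      #𝒜 = Cardinal.lift.{1} ((2 : Cardinal) ^ Cardinal.aleph.{0} 1) := by
  rw [lift_two_power, lift_aleph0, ← mk_countableOrdinals]
  obtain ⟨e⟩ : Nonempty (TreeNode countableOrdinals ↪ countableOrdinals) :=
    le_def _ _ |>.1 (mk_countableOrdinals ▸ mk_treeNode_countableOrdinals_le h)
  let φ : TreeNode countableOrdinals ↪ Ordinal := e.trans (Function.Embedding.subtype _)
  have hIic (β : countableOrdinals) : #(Iic β) < #countableOrdinals := by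
    simpa [mk_countableOrdinals] using
      (mk_Iic_countableOrdinals_le β).trans_lt aleph0_lt_aleph_one
  have hbranches := (TreeNode.isAlmostDisjointFamily_range_branch
    mk_Iic_countableOrdinals_le).image φ (range_subset_iff.2 fun x => (e x).2)
  obtain ⟨𝒜, hbranches𝒜, h𝒜⟩ := hbranches.exists_maximal_superset
  refine ⟨𝒜, h𝒜.prop.1, fun A hA B hB hAB => h𝒜.prop.2 hA hB hAB,
    fun N hNX hN => IsAlmostDisjointFamily.exists_mk_inter_eq_of_maximal h𝒜
      (by simp) hNX hN,
    le_antisymm h𝒜.prop.mk_le_two_power ?_⟩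
  calc 2 ^ #countableOrdinals = #(countableOrdinals → Bool) := by simp
    _ = #((φ '' ·) '' range TreeNode.branch) := by
      rw [mk_image_eq (image_injective.2 φ.injective),
        mk_range_eq _ (TreeNode.branch_injective hIic)]
    _ ≤ #𝒜 := mk_le_mk_of_subset hbranches𝒜
end

section
/- Let X be the space X[λ, μ, 𝒜, C̄] of the construction. For every A ⊆ λ with |A| < μ, the set ⋃{X_α : α ∈ A} is a closed discrete subspace of X. -/
open Set Ordinal Cardinal Topology

noncomputable section

namespace DSoukupPaper

/-- The set `S^λ_μ` of ordinals below `lam` of cofinality `mu`. -/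
def Sset (lam : Ordinal.{0}) (mu : Cardinal.{0}) : Set Ordinal := {α | α < lam ∧ α.cof = mu}

/-- `C` is a club in the ordinal `o`. -/
def IsClubBelow (C : Set Ordinal.{0}) (o : Ordinal.{0}) : Prop :=
  C ⊆ Set.Iio o ∧ (∀ β < o, ∃ γ ∈ C, β ≤ γ) ∧
    (∀ β < o, Order.IsSuccLimit β → (∀ γ < β, ∃ δ ∈ C, γ < δ ∧ δ < β) → β ∈ C)

/-- `A` is nonstationary in the ordinal `o`. -/
def IsNonstationaryBelow (A : Set Ordinal.{0}) (o : Ordinal.{0}) : Prop :=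
  ∃ C : Set Ordinal, IsClubBelow C o ∧ ∀ x ∈ A, x ∉ C

/-- `A` is stationary in the ordinal `o`. -/
def IsStationaryBelow (A : Set Ordinal.{0}) (o : Ordinal.{0}) : Prop :=
  ∀ C : Set Ordinal, IsClubBelow C o → ∃ x ∈ A, x ∈ C

/-- A `T₁` space is linearly D iff every nontrivial monotone open cover admits a
closed discrete big set (Guo–Junnila characterization, taken as definition). -/
def LinearlyDSpace (Y : Type*) [TopologicalSpace Y] : Prop :=
  ∀ 𝒰 : Set (Set Y), (∀ U ∈ 𝒰, IsOpen U) → ⋃₀ 𝒰 = Set.univ →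
    IsChain (· ⊆ ·) 𝒰 → (∀ U ∈ 𝒰, U ≠ Set.univ) →
    ∃ D : Set Y, IsClosed D ∧ DiscreteTopology D ∧ ∀ U ∈ 𝒰, ¬D ⊆ U

/-- The data of the construction `X[λ,μ,𝒜,C̄]`: cardinals `λ > μ = cf(μ)`,
a MAD family `𝒜 = {M^φ : φ < κ} ⊆ [μ]^μ`, and an `S^λ_μ`-club sequence
`C̄ = ⟨C_α : α ∈ S^λ_μ⟩`, given via increasing enumerations `a α : μ → C_α`. -/
structure Setup where
  lam : Cardinal.{0}
  mu : Cardinal.{0}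
  kappa : Cardinal.{0}
  mu_reg : mu.IsRegular
  mu_lt_lam : mu < lam
  /-- the MAD family: `M φ` for `φ < κ` -/
  M : Ordinal.{0} → Set Ordinal.{0}
  M_sub : ∀ φ < kappa.ord, M φ ⊆ Set.Iio mu.ord
  M_card : ∀ φ < kappa.ord, #(M φ) = Cardinal.lift.{1} mu
  M_ad : ∀ φ < kappa.ord, ∀ ψ < kappa.ord, φ ≠ ψ →
    #(↥(M φ ∩ M ψ)) < Cardinal.lift.{1} mu
  M_mad : ∀ N ⊆ Set.Iio mu.ord, #N = Cardinal.lift.{1} mu →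
    ∃ φ < kappa.ord, #(↥(N ∩ M φ)) = Cardinal.lift.{1} mu
  /-- the club sequence: `a α ξ` is the `ξ`-th element of `C_α` -/
  a : Ordinal.{0} → Ordinal.{0} → Ordinal.{0}
  a_mono : ∀ α ∈ Sset lam.ord mu, ∀ ξ < mu.ord, ∀ ζ < ξ, a α ζ < a α ξ
  a_lt : ∀ α ∈ Sset lam.ord mu, ∀ ξ < mu.ord, a α ξ < α
  a_unbounded : ∀ α ∈ Sset lam.ord mu, ∀ β < α, ∃ ξ < mu.ord, β ≤ a α ξ
  a_closed : ∀ α ∈ Sset lam.ord mu, ∀ ξ < mu.ord, Order.IsSuccLimit ξ →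
    IsLUB (a α '' Set.Iio ξ) (a α ξ)

namespace Setup

variable (P : Setup)

/-- `C_α` as a set. -/
def C (α : Ordinal) : Set Ordinal := P.a α '' Set.Iio P.mu.ord

open Classical in
/-- the interval `I^ξ_α`. -/
def I (α ξ : Ordinal) : Set Ordinal :=
  if Order.IsSuccLimit ξ then Set.Icc (P.a α ξ) (P.a α (ξ + 1)) else Set.Ioc (P.a α ξ) (P.a α (ξ + 1))

/-- the underlying set of the space: a subset of `λ × κ`. -/
def Xset : Set (Ordinal × Ordinal) :=
  {p | p.1 < P.lam.ord ∧
    ((p.1 ∈ Sset P.lam.ord P.mu ∧ p.2 < P.kappa.ord) ∨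
      (p.1 ∉ Sset P.lam.ord P.mu ∧ p.2 = 0))}

/-- the column `X_α` (as a set of pairs). -/
def col (α : Ordinal) : Set (Ordinal × Ordinal) := {p ∈ P.Xset | p.1 = α}

/-- basic neighborhood `U((α,φ),η)` for `α ∈ S^λ_μ`. -/
def U1 (α φ η : Ordinal) : Set (Ordinal × Ordinal) :=
  {(α, φ)} ∪ ⋃ γ ∈ (⋃ ξ ∈ {ξ | ξ ∈ P.M φ ∧ η ≤ ξ}, P.I α ξ), P.col γ

/-- basic neighborhood `U(α,β) = ⋃{X_γ : β < γ ≤ α}`. -/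
def U3 (α β : Ordinal) : Set (Ordinal × Ordinal) := ⋃ γ ∈ Set.Ioc β α, P.col γ

/-- the collection of basic open sets. -/
def basics : Set (Set (Ordinal × Ordinal)) :=
  {B | (∃ α ∈ Sset P.lam.ord P.mu, ∃ φ < P.kappa.ord, ∃ η < P.mu.ord, B = P.U1 α φ η) ∨
    (∃ α < P.lam.ord, α.cof < P.mu ∧ B = {(α, 0)}) ∨
    (∃ α < P.lam.ord, P.mu < α.cof ∧ ∃ β < α, B = P.U3 α β)}

/-- the topology of `X[λ,μ,𝒜,C̄]`, generated by the basic open sets. -/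
instance instTopo : TopologicalSpace ↥P.Xset :=
  TopologicalSpace.generateFrom {V | ∃ B ∈ P.basics, V = Subtype.val ⁻¹' B}

/-- the column `X_α` viewed inside the space. -/
def colS (α : Ordinal) : Set ↥P.Xset := {x | (x : Ordinal × Ordinal).1 = α}

/-- the projection `π(F) = {α < λ : F ∩ X_α ≠ ∅}`. -/
def pi (F : Set ↥P.Xset) : Set Ordinal := {α | ∃ x ∈ F, (x : Ordinal × Ordinal).1 = α}

/-- `F` is unbounded iff `π(F)` is unbounded in `λ`. -/
def Unbounded (F : Set ↥P.Xset) : Prop := ∀ β < P.lam.ord, ∃ γ ∈ P.pi F, β < γ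

/-- `F` is high enough iff `|{α < λ : |F_α| = |F|}| ≥ μ`. -/
def HighEnough (F : Set ↥P.Xset) : Prop :=
  Cardinal.lift.{1} P.mu ≤ #({α | #(↥(F ∩ P.colS α)) = #F} : Set Ordinal)

end Setup
end DSoukupPaper

/-!
Points on columns `X_α` with `cf(α) < μ` are isolated. For `cf(α) ≥ μ`, a basic neighbourhood
of a point of `X_α` meets, apart from the point itself, only columns `X_γ` with `β ≤ γ < α`,
where `β < α` can be taken arbitrarily large; and a set `A` of fewer than `μ ≤ cf(α)` ordinals
is bounded below `α`. So every point has a neighbourhood meeting `⋃{X_α : α ∈ A}` in at most that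
point, which makes this union closed and discrete.
-/

universe u

theorem Ordinal.exists_lt_forall_lt_of_mk_lt_cof {A : Set Ordinal.{u}} {α : Ordinal.{u}}
    (hA : #A < Cardinal.lift.{u + 1} α.cof) : ∃ β < α, ∀ γ ∈ A, γ < α → γ < β := by
  have hs : #↥(A ∩ Iio α) < (Ordinal.lift.{u + 1} α).cof := by
    rw [← lift_cof]
    exact (mk_le_mk_of_subset inter_subset_left).trans_lt hA
  refine ⟨sSup ((· + 1) '' (A ∩ Iio α)), sSup_add_one_lt_of_lt_cof hs fun _ h ↦ h.2, ?_⟩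
  intro γ hγA hγα
  have hbdd : BddAbove ((· + 1) '' (A ∩ Iio α)) :=
    ⟨α, forall_mem_image.2 fun _ h ↦ Order.add_one_le_of_lt h.2⟩
  exact (lt_add_one γ).trans_le (le_csSup hbdd (mem_image_of_mem _ ⟨hγA, hγα⟩))

theorem isClosed_and_discreteTopology_of_forall_exists_isOpen {X : Type*} [TopologicalSpace X]
    {D : Set X} (h : ∀ x, ∃ U, IsOpen U ∧ x ∈ U ∧ U ∩ D ⊆ {x}) :
    IsClosed D ∧ DiscreteTopology D := by
  constructor
  · rw [← isOpen_compl_iff, isOpen_iff_forall_mem_open]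
    intro x hx
    obtain ⟨U, hU, hxU, hUD⟩ := h x
    refine ⟨U, fun y hyU hyD ↦ ?_, hU, hxU⟩
    rw [mem_singleton_iff.1 (hUD ⟨hyU, hyD⟩)] at hyD
    exact hx hyD
  · rw [discreteTopology_subtype_iff']
    intro x hx
    obtain ⟨U, hU, hxU, hUD⟩ := h x
    exact ⟨U, hU, hUD.antisymm (singleton_subset_iff.2 ⟨hxU, hx⟩)⟩

namespace DSoukupPaper.Setup

variable (P : Setup)

theorem isOpen_preimage_of_mem_basics {B : Set (Ordinal × Ordinal)} (hB : B ∈ P.basics) :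
    IsOpen (Subtype.val ⁻¹' B : Set P.Xset) :=
  TopologicalSpace.isOpen_generateFrom_of_mem ⟨B, hB, rfl⟩

theorem isSuccLimit_mu_ord : Order.IsSuccLimit P.mu.ord :=
  isSuccLimit_ord P.mu_reg.aleph0_le

theorem a_le_a {α ζ ξ : Ordinal} (hα : α ∈ Sset P.lam.ord P.mu) (hξ : ξ < P.mu.ord)
    (hζξ : ζ ≤ ξ) : P.a α ζ ≤ P.a α ξ := by
  rcases hζξ.eq_or_lt with rfl | h
  · exact le_rfl
  · exact (P.a_mono α hα ξ hξ ζ h).le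

theorem I_subset_Icc (α ξ : Ordinal) : P.I α ξ ⊆ Icc (P.a α ξ) (P.a α (ξ + 1)) := by
  unfold I
  split_ifs
  exacts [subset_rfl, Ioc_subset_Icc_self]

theorem fst_mem_Ico_of_mem_U1 {α φ η : Ordinal} (hα : α ∈ Sset P.lam.ord P.mu)
    (hφ : φ < P.kappa.ord) {p : Ordinal × Ordinal} (hp : p ∈ P.U1 α φ η) (hne : p ≠ (α, φ)) :
    p.1 ∈ Ico (P.a α η) α := by
  simp only [U1, mem_union, mem_singleton_iff, hne, false_or, mem_iUnion, col,
    mem_ofPred_eq, exists_prop] at hp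
  obtain ⟨γ, ⟨ξ, ⟨hξM, hηξ⟩, hγI⟩, -, rfl⟩ := hp
  have hξ : ξ < P.mu.ord := P.M_sub φ hφ hξM
  have hξ1 : ξ + 1 < P.mu.ord := P.isSuccLimit_mu_ord.add_one_lt hξ
  obtain ⟨hlo, hhi⟩ := P.I_subset_Icc α ξ hγI
  exact ⟨(P.a_le_a hα hξ hηξ).trans hlo, hhi.trans_lt (P.a_lt α hα _ hξ1)⟩

theorem fst_mem_Ioc_of_mem_U3 {α β : Ordinal} {p : Ordinal × Ordinal} (hp : p ∈ P.U3 α β) :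
    p.1 ∈ Ioc β α := by
  simp only [U3, mem_iUnion, col, mem_ofPred_eq, exists_prop] at hp
  obtain ⟨γ, hγ, -, rfl⟩ := hp
  exact hγ

theorem eq_zero_of_mem_Xset {p : Ordinal × Ordinal} (hp : p ∈ P.Xset)
    (hS : p.1 ∉ Sset P.lam.ord P.mu) : p.2 = 0 := by
  rcases hp.2 with h | h
  exacts [absurd h.1 hS, h.2]

theorem exists_basic_inter_subset {A : Set Ordinal} (hcard : #A < Cardinal.lift.{1} P.mu)
    (x : P.Xset) :
    ∃ B ∈ P.basics, x.1 ∈ B ∧ ∀ y : P.Xset, y.1 ∈ B → y.1.1 ∈ A → y = x := by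
  obtain ⟨⟨α, φ⟩, hαlt, hx⟩ := x
  by_cases hS : α ∈ Sset P.lam.ord P.mu
  · have hφ : φ < P.kappa.ord := hx.resolve_right (fun h ↦ h.1 hS) |>.2
    obtain ⟨β, hβα, hβA⟩ :=
      exists_lt_forall_lt_of_mk_lt_cof (α := α) (by rwa [hS.2])
    obtain ⟨η, hη, hβη⟩ := P.a_unbounded α hS β hβα
    refine ⟨P.U1 α φ η, Or.inl ⟨α, hS, φ, hφ, η, hη, rfl⟩, Or.inl rfl, fun y hyB hyA ↦ ?_⟩
    by_contra hne
    have hγ := P.fst_mem_Ico_of_mem_U1 hS hφ hyB (fun h ↦ hne (Subtype.ext h))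
    exact (hβA _ hyA hγ.2).not_ge (hβη.trans hγ.1)
  · obtain rfl : φ = 0 := P.eq_zero_of_mem_Xset ⟨hαlt, hx⟩ hS
    have hcof : α.cof ≠ P.mu := fun h ↦ hS ⟨hαlt, h⟩
    rcases hcof.lt_or_gt with hcof | hcof
    · refine ⟨{(α, 0)}, Or.inr (Or.inl ⟨α, hαlt, hcof, rfl⟩), rfl, fun y hy _ ↦ ?_⟩
      exact Subtype.ext hy
    · obtain ⟨β, hβα, hβA⟩ := exists_lt_forall_lt_of_mk_lt_cof (α := α)
        (hcard.trans (Cardinal.lift_lt.2 hcof))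
      refine ⟨P.U3 α β, Or.inr (Or.inr ⟨α, hαlt, hcof, β, hβα, rfl⟩), ?_, fun y hyB hyA ↦ ?_⟩
      · simp only [U3, mem_iUnion, col, mem_ofPred_eq, exists_prop]
        exact ⟨α, ⟨hβα, le_rfl⟩, ⟨hαlt, hx⟩, rfl⟩
      obtain ⟨hβγ, hγα⟩ := P.fst_mem_Ioc_of_mem_U3 hyB
      obtain rfl : y.1.1 = α := hγα.eq_or_lt.resolve_right fun h ↦ (hβA _ hyA h).not_gt hβγ
      have hy0 := P.eq_zero_of_mem_Xset y.2 hS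
      exact Subtype.ext (Prod.ext rfl hy0)

end DSoukupPaper.Setup

namespace DSoukupPaper

theorem stmt6_general (P : Setup) (A : Set Ordinal)
    (hcard : #A < Cardinal.lift.{1} P.mu) :
    IsClosed (⋃ α ∈ A, P.colS α) ∧ DiscreteTopology ↥(⋃ α ∈ A, P.colS α) := by
  apply isClosed_and_discreteTopology_of_forall_exists_isOpen
  intro x
  obtain ⟨B, hB, hxB, hBA⟩ := P.exists_basic_inter_subset hcard x
  refine ⟨Subtype.val ⁻¹' B, P.isOpen_preimage_of_mem_basics hB, hxB, fun y ⟨hyB, hyA⟩ ↦ ?_⟩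
  simp only [Setup.colS, mem_iUnion, mem_ofPred_eq, exists_prop, exists_eq_right'] at hyA
  exact hBA y hyB hyA

theorem stmt6 (P : Setup) (A : Set Ordinal) (hA : A ⊆ Set.Iio P.lam.ord)
    (hcard : #A < Cardinal.lift.{1} P.mu) :
    IsClosed (⋃ α ∈ A, P.colS α) ∧ DiscreteTopology ↥(⋃ α ∈ A, P.colS α) :=
  stmt6_general P A hcard

end DSoukupPaper
end
end

section
/- Let X = X[λ, μ, 𝒜, C̄]. If F ⊆ X is closed, α ∈ S^λ_μ, and C_α ⊆ (π(F))' (i.e., every element of C_α is an accumulation point of π(F) in λ), then F ∩ X_α = X_α. -/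
open Set Ordinal Cardinal Topology

noncomputable section

/-!
Every basic neighbourhood of a point `(α, φ)` with `α ∈ S^λ_μ` contains all columns `X_γ` with
`δ < γ` and `γ` in a gap `(a_α ξ, a_α (ξ + 1))` of `C_α` for some `ξ ∈ M^φ`, `ξ ≥ η`, where `δ < α`
and `η < μ` depend on the neighbourhood. For `U((α₁, φ₁), η₁) ∋ (α, φ)` with `α ∈ I^ξ_{α₁}` this
uses `α ≠ a_{α₁} ξ` for limit `ξ`, as `cf (a_{α₁} ξ) = cf ξ < μ`. These column sets form a filter
base, and each of them meets `π(F)`: for large `ξ ∈ M^φ` the point `a_α (ξ + 1) ∈ C_α` is an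
accumulation point of `π(F)`, so `π(F)` meets the gap below it.
-/

namespace DSoukupPaper.Setup

open Filter TopologicalSpace

variable (P : Setup)

def tailGaps (α φ η δ : Ordinal) : Set Ordinal :=
  {γ | δ < γ ∧ ∃ ξ ∈ P.M φ, η ≤ ξ ∧ γ ∈ Ioo (P.a α ξ) (P.a α (ξ + 1))}

def tailFilter (α φ : Ordinal) : Filter Ordinal :=
  ⨅ (p : Ordinal × Ordinal) (_ : p.1 < P.mu.ord ∧ p.2 < α), 𝓟 (P.tailGaps α φ p.1 p.2)

variable {P}

lemma mu_ord_pos : 0 < P.mu.ord :=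
  (isSuccLimit_ord P.mu_reg.aleph0_le).bot_lt

lemma add_one_lt_mu_ord {ξ : Ordinal} (hξ : ξ < P.mu.ord) : ξ + 1 < P.mu.ord := by
  rw [← Order.succ_eq_add_one]
  exact (isSuccLimit_ord P.mu_reg.aleph0_le).succ_lt hξ

lemma snd_lt_of_mem_Xset {p : Ordinal × Ordinal} (hp : p ∈ P.Xset)
    (h : p.1 ∈ Sset P.lam.ord P.mu) : p.2 < P.kappa.ord := by
  rcases hp.2 with ⟨-, hlt⟩ | ⟨hnot, -⟩
  exacts [hlt, absurd h hnot]

lemma exists_mem_M_le {φ η : Ordinal} (hφ : φ < P.kappa.ord) (hη : η < P.mu.ord) :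
    ∃ ξ ∈ P.M φ, η ≤ ξ := by
  by_contra! h
  have hcard := Cardinal.mk_le_mk_of_subset (show P.M φ ⊆ Iio η from h)
  rw [P.M_card φ hφ, Cardinal.mk_Iio_ordinal, Cardinal.lift_le] at hcard
  exact (Cardinal.lt_ord.mp hη).not_ge hcard

lemma cof_a_lt_of_isSuccLimit {α ξ : Ordinal} (hα : α ∈ Sset P.lam.ord P.mu)
    (hξ : ξ < P.mu.ord) (hlim : Order.IsSuccLimit ξ) : (P.a α ξ).cof < P.mu := by
  have : Nonempty (Iio ξ) := ⟨⟨0, hlim.bot_lt⟩⟩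
  have hmono : StrictMono fun ζ : Iio ξ => P.a α ζ := fun ζ ζ' h =>
    P.a_mono α hα ζ' (ζ'.2.trans hξ) ζ h
  have hsup : ⨆ ζ : Iio ξ, P.a α ζ = P.a α ξ := by
    apply IsLUB.ciSup_eq
    rw [← image_eq_range]
    exact P.a_closed α hα ξ hξ hlim
  rw [← hsup, cof_iSup_Iio hmono hlim.isSuccPrelimit]
  exact (cof_le_card ξ).trans_lt (Cardinal.lt_ord.mp hξ)

lemma a_lt_of_mem_I {α₁ ξ α : Ordinal} (hα₁ : α₁ ∈ Sset P.lam.ord P.mu) (hξ : ξ < P.mu.ord)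
    (hα : α.cof = P.mu) (h : α ∈ P.I α₁ ξ) : P.a α₁ ξ < α := by
  unfold Setup.I at h
  split_ifs at h with hlim
  · refine h.1.lt_of_ne fun heq => ?_
    exact (P.cof_a_lt_of_isSuccLimit hα₁ hξ hlim).ne (heq ▸ hα)
  · exact h.1

lemma Ioc_subset_I_of_mem_I {α₁ ξ α : Ordinal} (h : α ∈ P.I α₁ ξ) :
    Ioc (P.a α₁ ξ) α ⊆ P.I α₁ ξ := by
  unfold Setup.I at h ⊢
  split_ifs at h ⊢
  · exact fun γ hγ => ⟨hγ.1.le, hγ.2.trans h.2⟩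
  · exact Ioc_subset_Ioc_right h.2

lemma Ioo_subset_I (α ξ : Ordinal) : Ioo (P.a α ξ) (P.a α (ξ + 1)) ⊆ P.I α ξ := by
  unfold Setup.I
  split_ifs
  exacts [Ioo_subset_Icc_self, Ioo_subset_Ioc_self]

lemma tailGaps_anti {α φ η η' δ δ' : Ordinal} (hη : η ≤ η') (hδ : δ ≤ δ') :
    P.tailGaps α φ η' δ' ⊆ P.tailGaps α φ η δ :=
  fun _ ⟨hδγ, ξ, hξM, hηξ, hγ⟩ => ⟨hδ.trans_lt hδγ, ξ, hξM, hη.trans hηξ, hγ⟩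

lemma tailGaps_subset_Ioo {α φ η δ : Ordinal} (hα : α ∈ Sset P.lam.ord P.mu)
    (hφ : φ < P.kappa.ord) : P.tailGaps α φ η δ ⊆ Ioo δ α :=
  fun _ ⟨hδγ, _, hξM, _, hγ⟩ =>
    ⟨hδγ, hγ.2.trans (P.a_lt α hα _ (add_one_lt_mu_ord (P.M_sub φ hφ hξM)))⟩

lemma tailGaps_subset_biUnion_I (α φ η δ : Ordinal) :
    P.tailGaps α φ η δ ⊆ ⋃ ξ ∈ {ξ | ξ ∈ P.M φ ∧ η ≤ ξ}, P.I α ξ :=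
  fun _ ⟨_, ξ, hξM, hηξ, hγ⟩ => mem_biUnion ⟨hξM, hηξ⟩ (P.Ioo_subset_I α ξ hγ)

lemma hasBasis_tailFilter {α : Ordinal} (φ : Ordinal) (hα : α ∈ Sset P.lam.ord P.mu) :
    (P.tailFilter α φ).HasBasis (fun p : Ordinal × Ordinal => p.1 < P.mu.ord ∧ p.2 < α)
      fun p => P.tailGaps α φ p.1 p.2 :=
  hasBasis_biInf_principal'
    (fun p hp q hq => ⟨(max p.1 q.1, max p.2 q.2), ⟨max_lt hp.1 hq.1, max_lt hp.2 hq.2⟩,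
      tailGaps_anti (le_max_left _ _) (le_max_left _ _),
      tailGaps_anti (le_max_right _ _) (le_max_right _ _)⟩)
    ⟨(0, 0), mu_ord_pos, (P.a_lt α hα 0 mu_ord_pos).pos⟩

lemma exists_tailGaps_subset_of_mem_basics {p : Ordinal × Ordinal} {B : Set (Ordinal × Ordinal)}
    (hα : p.1 ∈ Sset P.lam.ord P.mu) (hφ : p.2 < P.kappa.ord) (hB : B ∈ P.basics) (hp : p ∈ B) :
    ∃ η < P.mu.ord, ∃ δ < p.1, ⋃ γ ∈ P.tailGaps p.1 p.2 η δ, P.col γ ⊆ B := by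
  obtain ⟨α, φ⟩ := p
  have hcols {δ : Ordinal} {S : Set Ordinal} (hS : Ioc δ α ⊆ S) :
      ⋃ γ ∈ P.tailGaps α φ 0 δ, P.col γ ⊆ ⋃ γ ∈ S, P.col γ :=
    biUnion_subset_biUnion_left ((tailGaps_subset_Ioo hα hφ).trans (Ioo_subset_Ioc_self.trans hS))
  rcases hB with ⟨α₁, hα₁, φ₁, hφ₁, η₁, hη₁, rfl⟩ | ⟨α₁, -, hcof, rfl⟩ | ⟨α₁, -, -, β, -, rfl⟩
  · rcases hp with hcenter | hcol
    · obtain ⟨rfl, rfl⟩ := Prod.mk.inj hcenter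
      refine ⟨η₁, hη₁, 0, (P.a_lt α hα 0 mu_ord_pos).pos, ?_⟩
      exact (biUnion_subset_biUnion_left (P.tailGaps_subset_biUnion_I _ _ _ _)).trans
        subset_union_right
    · obtain ⟨γ, hγ, -, rfl : α = γ⟩ := mem_iUnion₂.1 hcol
      obtain ⟨ξ, ⟨hξM, hηξ⟩, hαI⟩ := mem_iUnion₂.1 hγ
      have hξ : ξ < P.mu.ord := P.M_sub φ₁ hφ₁ hξM
      refine ⟨0, mu_ord_pos, P.a α₁ ξ, a_lt_of_mem_I hα₁ hξ hα.2 hαI, ?_⟩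
      exact (hcols (Ioc_subset_I_of_mem_I hαI)).trans <|
        (biUnion_subset_biUnion_left (subset_biUnion_of_mem (u := fun ξ => P.I α₁ ξ)
          (show ξ ∈ {ξ | ξ ∈ P.M φ₁ ∧ η₁ ≤ ξ} from ⟨hξM, hηξ⟩))).trans subset_union_right
  · obtain ⟨rfl, -⟩ := Prod.mk.inj hp
    exact absurd hα.2 hcof.ne
  · obtain ⟨γ, hγ, -, rfl : α = γ⟩ := mem_iUnion₂.1 hp
    exact ⟨0, mu_ord_pos, β, hγ.1, hcols (Ioc_subset_Ioc_right hγ.2)⟩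

lemma comap_tailFilter_le_nhds (x : P.Xset) (hx : (x : Ordinal × Ordinal).1 ∈ Sset P.lam.ord P.mu) :
    (P.tailFilter x.1.1 x.1.2).comap (fun y : P.Xset => (y : Ordinal × Ordinal).1) ≤ 𝓝 x := by
  rw [nhds_generateFrom]
  refine le_iInf₂ fun s ⟨hxs, B, hB, hsB⟩ => ?_
  subst hsB
  obtain ⟨η, hη, δ, hδ, hsub⟩ :=
    exists_tailGaps_subset_of_mem_basics hx (snd_lt_of_mem_Xset x.2 hx) hB hxs
  have hmem := (hasBasis_tailFilter x.1.2 hx).mem_of_mem (i := (η, δ)) ⟨hη, hδ⟩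
  exact le_principal_iff.2 (mem_comap.2 ⟨_, hmem, fun y hy => hsub (mem_biUnion hy ⟨y.2, rfl⟩)⟩)

lemma frequently_tailFilter {α φ : Ordinal} {A : Set Ordinal} (hα : α ∈ Sset P.lam.ord P.mu)
    (hφ : φ < P.kappa.ord) (hA : ∀ c ∈ P.C α, ∀ β < c, ∃ γ ∈ A, β < γ ∧ γ < c) :
    ∃ᶠ γ in P.tailFilter α φ, γ ∈ A := by
  rw [(hasBasis_tailFilter φ hα).frequently_iff]
  rintro ⟨η, δ⟩ ⟨hη, hδ⟩
  obtain ⟨ζ, hζ, hδζ⟩ := P.a_unbounded α hα δ hδ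
  obtain ⟨ξ, hξM, hξ⟩ := exists_mem_M_le hφ (max_lt hη (add_one_lt_mu_ord hζ))
  have hξμ : ξ + 1 < P.mu.ord := add_one_lt_mu_ord (P.M_sub φ hφ hξM)
  have hζξ : P.a α ζ < P.a α ξ :=
    P.a_mono α hα ξ (P.M_sub φ hφ hξM) ζ ((lt_add_one ζ).trans_le ((le_max_right _ _).trans hξ))
  obtain ⟨γ, hγA, hξγ, hγξ⟩ :=
    hA _ ⟨ξ + 1, hξμ, rfl⟩ _ (P.a_mono α hα _ hξμ ξ (lt_add_one ξ))
  exact ⟨γ, ⟨hδζ.trans_lt (hζξ.trans hξγ), ξ, hξM, (le_max_left _ _).trans hξ, hξγ, hγξ⟩, hγA⟩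

end DSoukupPaper.Setup

namespace DSoukupPaper

/-- If `F` is closed, `α ∈ S^λ_μ` and every element of `C_α` is an accumulation point of
`π(F)`, then `F ∩ X_α = X_α`, i.e. the whole column lies in `F`. -/
theorem stmt15 (P : Setup) (F : Set ↥P.Xset) (hF : IsClosed F) (α : Ordinal)
    (hα : α ∈ Sset P.lam.ord P.mu)
    (hC : ∀ c ∈ P.C α, ∀ β < c, ∃ γ ∈ P.pi F, β < γ ∧ γ < c) :
    P.colS α ⊆ F := by
  intro x hx
  obtain rfl : (x : Ordinal × Ordinal).1 = α := hx
  rw [← hF.closure_eq, mem_closure_iff_frequently]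
  refine (Filter.frequently_comap.2 ?_).filter_mono (Setup.comap_tailFilter_le_nhds x hα)
  exact (Setup.frequently_tailFilter hα (Setup.snd_lt_of_mem_Xset x.2 hα) hC).mono
    fun _ ⟨y, hyF, hy⟩ => ⟨y, hy, hyF⟩
end DSoukupPaper
end
end
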